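/- arXiv:1805.04996 — 3 statements merged into one kernel-verified Lean document; each statement's English description precedes it below -/
import Mathlib

section
/- Suppose constants H^{αβ} (α,β = 0,1,2,3) satisfy the null condition: H^{αβ} X_α X_β = 0 for every X ∈ ℝ⁴ with X_0² = X_1² + X_2² + X_3². Then there is a constant C > 0 (depending only on the H^{αβ}) such that for all smooth functions v, w on ℝ×(ℝ³∖{0}), |H^{αβ}(∂_α v)(∂_β w)| ≤ C(|Tv||∂w| + |∂v||Tw|) pointwise, where summation over repeated indices α,β from 0 to 3 is understood. -/
noncomputable section

/-- Points of spacetime ℝ×ℝ³, coordinate 0 is time. -/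
abbrev Pt := Fin 4 → ℝ

/-- Partial derivative ∂_α. -/
def pd (α : Fin 4) (u : Pt → ℝ) : Pt → ℝ :=
  fun p => fderiv ℝ u p (Pi.single α 1)

/-- Scaling operator S = t∂_t + x·∇. -/
def Sop (u : Pt → ℝ) : Pt → ℝ :=
  fun p => p 0 * pd 0 u p + (p 1 * pd 1 u p + p 2 * pd 2 u p + p 3 * pd 3 u p)

/-- d'Alembertian □ = ∂_t² − Δ. -/
def Box (u : Pt → ℝ) : Pt → ℝ :=
  fun p => pd 0 (pd 0 u) p - (pd 1 (pd 1 u) p + pd 2 (pd 2 u) p + pd 3 (pd 3 u) p)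

/-- Rotation operator Ω_{ij} = x_i∂_j − x_j∂_i. -/
def Om (i j : Fin 4) (u : Pt → ℝ) : Pt → ℝ :=
  fun p => p i * pd j u p - p j * pd i u p

/-- r = |x| : Euclidean norm of the spatial part. -/
def rad (p : Pt) : ℝ := Real.sqrt ((p 1) ^ 2 + (p 2) ^ 2 + (p 3) ^ 2)

/-- Good derivative T_k = ∂_k + (x_k/|x|)∂_t. -/
def Tgood (k : Fin 4) (u : Pt → ℝ) : Pt → ℝ :=
  fun p => pd k u p + (p k / rad p) * pd 0 u p

/-- Kronecker delta. -/
def kdelta (a b : Fin 4) : ℝ := if a = b then 1 else 0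

/-- Null condition for quadratic coefficients H^{αβ}. -/
def NullH (H : Fin 4 → Fin 4 → ℝ) : Prop :=
  ∀ X : Fin 4 → ℝ, (X 0) ^ 2 = (X 1) ^ 2 + (X 2) ^ 2 + (X 3) ^ 2 →
    ∑ α : Fin 4, ∑ β : Fin 4, H α β * X α * X β = 0

/-- |∂v| = (Σ_α |∂_α v|²)^{1/2}. -/
def Dnorm (v : Pt → ℝ) (p : Pt) : ℝ := Real.sqrt (∑ α : Fin 4, (pd α v p) ^ 2)

/-- |Tv| = (Σ_{k=1}^3 |T_k v|²)^{1/2}. -/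
def Tnorm (v : Pt → ℝ) (p : Pt) : ℝ :=
  Real.sqrt ((Tgood 1 v p) ^ 2 + (Tgood 2 v p) ^ 2 + (Tgood 3 v p) ^ 2)


def xi (p : Pt) : Fin 4 → ℝ := fun α => if α = 0 then 1 else -(p α / rad p)

def Tvec (u : Pt → ℝ) (p : Pt) : Fin 4 → ℝ := fun α => if α = 0 then 0 else Tgood α u p

lemma abs_le_sqrt' {x s : ℝ} (h : x ^ 2 ≤ s) : |x| ≤ Real.sqrt s := by
  rw [← Real.sqrt_sq_eq_abs x]
  exact Real.sqrt_le_sqrt h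

lemma pd_decomp (u : Pt → ℝ) (p : Pt) (α : Fin 4) :
    pd α u p = pd 0 u p * xi p α + Tvec u p α := by
  by_cases h : α = 0
  · subst h; simp [xi, Tvec]
  · simp only [xi, Tvec, Tgood, if_neg h]; ring

lemma bound_sum (H : Fin 4 → Fin 4 → ℝ) (c d : Fin 4 → ℝ) (A B : ℝ)
    (hA : 0 ≤ A) (hB : 0 ≤ B)
    (hc : ∀ α, |c α| ≤ A) (hd : ∀ β, |d β| ≤ B) :
    |∑ α : Fin 4, ∑ β : Fin 4, H α β * c α * d β|
      ≤ (∑ α : Fin 4, ∑ β : Fin 4, |H α β|) * A * B := by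
  calc |∑ α : Fin 4, ∑ β : Fin 4, H α β * c α * d β|
      ≤ ∑ α : Fin 4, |∑ β : Fin 4, H α β * c α * d β| := Finset.abs_sum_le_sum_abs _ _
    _ ≤ ∑ α : Fin 4, ∑ β : Fin 4, |H α β * c α * d β| :=
        Finset.sum_le_sum fun α _ => Finset.abs_sum_le_sum_abs _ _
    _ ≤ ∑ α : Fin 4, ∑ β : Fin 4, |H α β| * A * B := by
        refine Finset.sum_le_sum fun α _ => Finset.sum_le_sum fun β _ => ?_
        rw [abs_mul, abs_mul]
        exact mul_le_mul (mul_le_mul le_rfl (hc α) (abs_nonneg _) (abs_nonneg _)) (hd β)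
          (abs_nonneg _) (by positivity)
    _ = (∑ α : Fin 4, ∑ β : Fin 4, |H α β|) * A * B := by
        simp [Finset.sum_mul]

set_option maxHeartbeats 1000000 in
/-- Null-form estimate |H^{αβ}(∂_α v)(∂_β w)| ≤ C(|Tv||∂w| + |∂v||Tw|). -/
theorem null_form_estimate_H (H : Fin 4 → Fin 4 → ℝ) (hH : NullH H) :
    ∃ C > 0, ∀ v w : Pt → ℝ, ContDiff ℝ (⊤ : ℕ∞) v → ContDiff ℝ (⊤ : ℕ∞) w →
      ∀ p : Pt, rad p ≠ 0 →
        |∑ α : Fin 4, ∑ β : Fin 4, H α β * pd α v p * pd β w p|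
          ≤ C * (Tnorm v p * Dnorm w p + Dnorm v p * Tnorm w p) := by
  classical
  have hM0 : (0:ℝ) ≤ ∑ α : Fin 4, ∑ β : Fin 4, |H α β| :=
    Finset.sum_nonneg fun _ _ => Finset.sum_nonneg fun _ _ => abs_nonneg _
  set M : ℝ := ∑ α : Fin 4, ∑ β : Fin 4, |H α β| with hMdef
  refine ⟨5 * M + 1, by linarith, ?_⟩
  intro v w _ _ p hr
  have hr2 : (rad p) ^ 2 = (p 1)^2 + (p 2)^2 + (p 3)^2 := Real.sq_sqrt (by positivity)
  have hω : (p 1 / rad p)^2 + (p 2 / rad p)^2 + (p 3 / rad p)^2 = 1 := by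
    field_simp
    linarith [hr2]
  have hxi0 : xi p 0 = 1 := rfl
  have hxi1 : xi p 1 = -(p 1 / rad p) := rfl
  have hxi2 : xi p 2 = -(p 2 / rad p) := rfl
  have hxi3 : xi p 3 = -(p 3 / rad p) := rfl
  have hT0v : Tvec v p 0 = 0 := rfl
  have hT0w : Tvec w p 0 = 0 := rfl
  -- null condition applied to xi
  have hQ : ∑ α : Fin 4, ∑ β : Fin 4, H α β * xi p α * xi p β = 0 := by
    apply hH
    rw [hxi0, hxi1, hxi2, hxi3]
    linear_combination -hω
  -- bounds on xi
  have hxibd : ∀ α : Fin 4, |xi p α| ≤ 1 := by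
    intro α
    fin_cases α
    · show |xi p 0| ≤ 1
      rw [hxi0]; norm_num
    · show |xi p 1| ≤ 1
      rw [hxi1, abs_neg, ← sq_le_one_iff_abs_le_one]
      nlinarith [sq_nonneg (p 2 / rad p), sq_nonneg (p 3 / rad p)]
    · show |xi p 2| ≤ 1
      rw [hxi2, abs_neg, ← sq_le_one_iff_abs_le_one]
      nlinarith [sq_nonneg (p 1 / rad p), sq_nonneg (p 3 / rad p)]
    · show |xi p 3| ≤ 1
      rw [hxi3, abs_neg, ← sq_le_one_iff_abs_le_one]
      nlinarith [sq_nonneg (p 1 / rad p), sq_nonneg (p 2 / rad p)]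
  -- bounds on Tvec
  have hTvbd : ∀ (u : Pt → ℝ) (α : Fin 4), |Tvec u p α| ≤ Tnorm u p := by
    intro u α
    have h0 : (0:ℝ) ≤ Tnorm u p := Real.sqrt_nonneg _
    fin_cases α
    · show |Tvec u p 0| ≤ Tnorm u p
      have : Tvec u p 0 = 0 := rfl
      rw [this, abs_zero]; exact h0
    · show |Tgood 1 u p| ≤ Tnorm u p
      exact abs_le_sqrt' (by nlinarith [sq_nonneg (Tgood 2 u p), sq_nonneg (Tgood 3 u p)])
    · show |Tgood 2 u p| ≤ Tnorm u p
      exact abs_le_sqrt' (by nlinarith [sq_nonneg (Tgood 1 u p), sq_nonneg (Tgood 3 u p)])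
    · show |Tgood 3 u p| ≤ Tnorm u p
      exact abs_le_sqrt' (by nlinarith [sq_nonneg (Tgood 1 u p), sq_nonneg (Tgood 2 u p)])
  have hpd0 : ∀ u : Pt → ℝ, |pd 0 u p| ≤ Dnorm u p := by
    intro u
    apply abs_le_sqrt'
    rw [Fin.sum_univ_four]
    nlinarith [sq_nonneg (pd 1 u p), sq_nonneg (pd 2 u p), sq_nonneg (pd 3 u p)]
  have hTD : ∀ u : Pt → ℝ, Tnorm u p ≤ 4 * Dnorm u p := by
    intro u
    have hsum : (Tgood 1 u p)^2 + (Tgood 2 u p)^2 + (Tgood 3 u p)^2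
        ≤ 16 * ∑ α : Fin 4, (pd α u p)^2 := by
      rw [Fin.sum_univ_four]
      simp only [Tgood]
      nlinarith [sq_nonneg (pd 1 u p - (p 1 / rad p) * pd 0 u p),
        sq_nonneg (pd 2 u p - (p 2 / rad p) * pd 0 u p),
        sq_nonneg (pd 3 u p - (p 3 / rad p) * pd 0 u p),
        sq_nonneg (pd 0 u p), sq_nonneg (pd 1 u p), sq_nonneg (pd 2 u p),
        sq_nonneg (pd 3 u p), hω, sq_nonneg ((p 1 / rad p) * pd 0 u p),
        sq_nonneg ((p 2 / rad p) * pd 0 u p), sq_nonneg ((p 3 / rad p) * pd 0 u p)]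
    calc Tnorm u p ≤ Real.sqrt (16 * ∑ α : Fin 4, (pd α u p)^2) := Real.sqrt_le_sqrt hsum
      _ = 4 * Dnorm u p := by
          rw [show (16:ℝ) = 4^2 by norm_num, Real.sqrt_mul (by positivity),
            Real.sqrt_sq (by norm_num : (0:ℝ) ≤ 4)]
          rfl
  -- decomposition of the sum
  have key : (∑ α : Fin 4, ∑ β : Fin 4, H α β * pd α v p * pd β w p)
      = pd 0 v p * pd 0 w p * (∑ α : Fin 4, ∑ β : Fin 4, H α β * xi p α * xi p β)
        + (pd 0 v p * (∑ α : Fin 4, ∑ β : Fin 4, H α β * xi p α * Tvec w p β)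
        + (pd 0 w p * (∑ α : Fin 4, ∑ β : Fin 4, H α β * Tvec v p α * xi p β)
        + (∑ α : Fin 4, ∑ β : Fin 4, H α β * Tvec v p α * Tvec w p β))) := by
    simp only [Fin.sum_univ_four]
    rw [pd_decomp v p 1, pd_decomp v p 2, pd_decomp v p 3,
        pd_decomp w p 1, pd_decomp w p 2, pd_decomp w p 3,
        hxi0, hT0v, hT0w]
    ring
  rw [key, hQ, mul_zero, zero_add]
  have hDv : 0 ≤ Dnorm v p := Real.sqrt_nonneg _
  have hDw : 0 ≤ Dnorm w p := Real.sqrt_nonneg _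
  have hTv : 0 ≤ Tnorm v p := Real.sqrt_nonneg _
  have hTw : 0 ≤ Tnorm w p := Real.sqrt_nonneg _
  have hS1 : |∑ α : Fin 4, ∑ β : Fin 4, H α β * xi p α * Tvec w p β| ≤ M * 1 * Tnorm w p :=
    bound_sum H _ _ 1 (Tnorm w p) zero_le_one hTw hxibd (hTvbd w)
  have hS2 : |∑ α : Fin 4, ∑ β : Fin 4, H α β * Tvec v p α * xi p β| ≤ M * Tnorm v p * 1 :=
    bound_sum H _ _ (Tnorm v p) 1 hTv zero_le_one (hTvbd v) hxibd
  have hS3 : |∑ α : Fin 4, ∑ β : Fin 4, H α β * Tvec v p α * Tvec w p β|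
      ≤ M * Tnorm v p * Tnorm w p :=
    bound_sum H _ _ (Tnorm v p) (Tnorm w p) hTv hTw (hTvbd v) (hTvbd w)
  have h1 : |pd 0 v p * ∑ α : Fin 4, ∑ β : Fin 4, H α β * xi p α * Tvec w p β|
      ≤ Dnorm v p * (M * 1 * Tnorm w p) := by
    rw [abs_mul]
    exact mul_le_mul (hpd0 v) hS1 (abs_nonneg _) hDv
  have h2 : |pd 0 w p * ∑ α : Fin 4, ∑ β : Fin 4, H α β * Tvec v p α * xi p β|
      ≤ Dnorm w p * (M * Tnorm v p * 1) := by
    rw [abs_mul]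
    exact mul_le_mul (hpd0 w) hS2 (abs_nonneg _) hDw
  have h3 : M * Tnorm v p * Tnorm w p ≤ M * Tnorm v p * (4 * Dnorm w p) :=
    mul_le_mul_of_nonneg_left (hTD w) (by positivity)
  have habs : |pd 0 v p * (∑ α : Fin 4, ∑ β : Fin 4, H α β * xi p α * Tvec w p β)
        + (pd 0 w p * (∑ α : Fin 4, ∑ β : Fin 4, H α β * Tvec v p α * xi p β)
        + (∑ α : Fin 4, ∑ β : Fin 4, H α β * Tvec v p α * Tvec w p β))|
      ≤ |pd 0 v p * (∑ α : Fin 4, ∑ β : Fin 4, H α β * xi p α * Tvec w p β)|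
        + (|pd 0 w p * (∑ α : Fin 4, ∑ β : Fin 4, H α β * Tvec v p α * xi p β)|
        + |∑ α : Fin 4, ∑ β : Fin 4, H α β * Tvec v p α * Tvec w p β|) :=
    (abs_add_le _ _).trans (by gcongr; exact abs_add_le _ _)
  have hfin : Dnorm v p * (M * 1 * Tnorm w p) + (Dnorm w p * (M * Tnorm v p * 1)
        + M * Tnorm v p * (4 * Dnorm w p))
      ≤ (5 * M + 1) * (Tnorm v p * Dnorm w p + Dnorm v p * Tnorm w p) := by
    nlinarith [mul_nonneg hTv hDw, mul_nonneg hDv hTw, mul_nonneg hM0 (mul_nonneg hTv hDw),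
      mul_nonneg hM0 (mul_nonneg hDv hTw)]
  refine habs.trans (le_trans ?_ hfin)
  gcongr
  exact hS3.trans h3
end
end

section
/- There is an absolute constant C > 0 such that for all smooth v on ℝ×(ℝ³∖{0}), all (t,x) with x ≠ 0, and all k ∈ {1,2,3}: |T_k v(t,x)| ≤ C⟨t⟩^{−1} (|∇_x v(t,x)| + |∂_t v(t,x)| + Σ_{1≤i<j≤3}|Ω_{ij} v(t,x)| + |S v(t,x)| + ⟨t−|x|⟩|∇_x v(t,x)|). -/
noncomputable section

/-- Japanese bracket ⟨s⟩ = (1+s²)^{1/2}. -/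
def jap (s : ℝ) : ℝ := Real.sqrt (1 + s ^ 2)

/-- |∇_x v| = (Σ_{k=1}^3 |∂_k v|²)^{1/2}. -/
def Gradnorm (v : Pt → ℝ) (p : Pt) : ℝ :=
  Real.sqrt ((pd 1 v p) ^ 2 + (pd 2 v p) ^ 2 + (pd 3 v p) ^ 2)

lemma wrap (t T X : ℝ) (h1 : |T| + |t * T| ≤ X) :
    |T| ≤ (Real.sqrt (1 + t ^ 2))⁻¹ * X := by
  have hc : (0:ℝ) < Real.sqrt (1 + t ^ 2) := Real.sqrt_pos.2 (by positivity)
  have hle : Real.sqrt (1 + t ^ 2) ≤ 1 + |t| := by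
    rw [show (1:ℝ) + |t| = Real.sqrt ((1 + |t|) ^ 2) from (Real.sqrt_sq (by positivity)).symm]
    exact Real.sqrt_le_sqrt (by nlinarith [abs_nonneg t, sq_abs t])
  have h2 : Real.sqrt (1 + t ^ 2) * |T| ≤ X := by
    calc Real.sqrt (1 + t ^ 2) * |T| ≤ (1 + |t|) * |T| :=
          mul_le_mul_of_nonneg_right hle (abs_nonneg T)
      _ = |T| + |t| * |T| := by ring
      _ = |T| + |t * T| := by rw [abs_mul]
      _ ≤ X := h1
  calc |T| = (Real.sqrt (1 + t ^ 2))⁻¹ * (Real.sqrt (1 + t ^ 2) * |T|) := by field_simp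
    _ ≤ (Real.sqrt (1 + t ^ 2))⁻¹ * X := mul_le_mul_of_nonneg_left h2 (inv_nonneg.2 hc.le)

lemma abs4 (w1 w2 w3 w4 : ℝ) : |w1 + w2 + w3 + w4| ≤ |w1| + |w2| + |w3| + |w4| := by
  calc |w1 + w2 + w3 + w4| ≤ |w1 + w2 + w3| + |w4| := abs_add_le _ _
    _ ≤ (|w1 + w2| + |w3|) + |w4| := add_le_add_left (abs_add_le _ _) _
    _ ≤ (|w1| + |w2| + |w3|) + |w4| := by
        have := abs_add_le w1 w2; linarith

lemma case1 (t r x1 x2 x3 a0 a1 a2 a3 : ℝ) (hr : 0 < r)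
    (hr2 : r ^ 2 = x1 ^ 2 + x2 ^ 2 + x3 ^ 2) :
    |a1 + x1 / r * a0| ≤ (Real.sqrt (1 + t ^ 2))⁻¹ *
      (Real.sqrt (a1 ^ 2 + a2 ^ 2 + a3 ^ 2) + |a0|
        + (|x1 * a2 - x2 * a1| + |x1 * a3 - x3 * a1| + |x2 * a3 - x3 * a2|)
        + |t * a0 + (x1 * a1 + x2 * a2 + x3 * a3)|
        + Real.sqrt (1 + (t - r) ^ 2) * Real.sqrt (a1 ^ 2 + a2 ^ 2 + a3 ^ 2)) := by
  apply wrap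
  set G := Real.sqrt (a1 ^ 2 + a2 ^ 2 + a3 ^ 2) with hGdef
  have hG : 0 ≤ G := Real.sqrt_nonneg _
  have ha1 : |a1| ≤ G := by
    rw [hGdef, ← Real.sqrt_sq_eq_abs]
    exact Real.sqrt_le_sqrt (by nlinarith [sq_nonneg a2, sq_nonneg a3])
  have hx1 : |x1| ≤ r := by nlinarith [sq_abs x1, abs_nonneg x1, sq_nonneg x2, sq_nonneg x3]
  have hx2 : |x2| ≤ r := by nlinarith [sq_abs x2, abs_nonneg x2, sq_nonneg x1, sq_nonneg x3]
  have hx3 : |x3| ≤ r := by nlinarith [sq_abs x3, abs_nonneg x3, sq_nonneg x1, sq_nonneg x2]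
  have hfrac : ∀ x w : ℝ, |x| ≤ r → |(x / r) * w| ≤ |w| := by
    intro x w hx
    rw [abs_mul, abs_div, abs_of_pos hr]
    calc |x| / r * |w| ≤ 1 * |w| := by
          apply mul_le_mul_of_nonneg_right _ (abs_nonneg w)
          rw [div_le_one hr]; exact hx
      _ = |w| := one_mul _
  have hb1 : |a1 + x1 / r * a0| ≤ G + |a0| := by
    calc |a1 + x1 / r * a0| ≤ |a1| + |(x1 / r) * a0| := abs_add_le _ _
      _ ≤ G + |a0| := add_le_add ha1 (hfrac _ _ hx1)
  have hid : t * (a1 + x1 / r * a0) =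
      (t - r) * a1 + (x2 / r) * (x2 * a1 - x1 * a2) + (x3 / r) * (x3 * a1 - x1 * a3)
        + (x1 / r) * (t * a0 + (x1 * a1 + x2 * a2 + x3 * a3)) := by
    field_simp
    linear_combination a1 * hr2
  have htr : |t - r| ≤ Real.sqrt (1 + (t - r) ^ 2) := by
    rw [← Real.sqrt_sq_eq_abs]
    exact Real.sqrt_le_sqrt (by nlinarith)
  have hb2 : |t * (a1 + x1 / r * a0)| ≤ Real.sqrt (1 + (t - r) ^ 2) * G
      + (|x1 * a2 - x2 * a1| + |x1 * a3 - x3 * a1| + |x2 * a3 - x3 * a2|)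
      + |t * a0 + (x1 * a1 + x2 * a2 + x3 * a3)| := by
    rw [hid]
    have h4 := abs4 ((t - r) * a1) ((x2 / r) * (x2 * a1 - x1 * a2))
      ((x3 / r) * (x3 * a1 - x1 * a3)) ((x1 / r) * (t * a0 + (x1 * a1 + x2 * a2 + x3 * a3)))
    have e1 : |(t - r) * a1| ≤ Real.sqrt (1 + (t - r) ^ 2) * G := by
      rw [abs_mul]
      exact mul_le_mul htr ha1 (abs_nonneg _) (Real.sqrt_nonneg _)
    have e2 := hfrac _ (x2 * a1 - x1 * a2) hx2
    have e3 := hfrac _ (x3 * a1 - x1 * a3) hx3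
    have e4 := hfrac _ (t * a0 + (x1 * a1 + x2 * a2 + x3 * a3)) hx1
    rw [abs_sub_comm (x2 * a1)] at e2
    rw [abs_sub_comm (x3 * a1)] at e3
    have e5 : (0:ℝ) ≤ |x2 * a3 - x3 * a2| := abs_nonneg _
    linarith
  linarith

lemma case2 (t r x1 x2 x3 a0 a1 a2 a3 : ℝ) (hr : 0 < r)
    (hr2 : r ^ 2 = x1 ^ 2 + x2 ^ 2 + x3 ^ 2) :
    |a2 + x2 / r * a0| ≤ (Real.sqrt (1 + t ^ 2))⁻¹ *
      (Real.sqrt (a1 ^ 2 + a2 ^ 2 + a3 ^ 2) + |a0|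
        + (|x1 * a2 - x2 * a1| + |x1 * a3 - x3 * a1| + |x2 * a3 - x3 * a2|)
        + |t * a0 + (x1 * a1 + x2 * a2 + x3 * a3)|
        + Real.sqrt (1 + (t - r) ^ 2) * Real.sqrt (a1 ^ 2 + a2 ^ 2 + a3 ^ 2)) := by
  apply wrap
  set G := Real.sqrt (a1 ^ 2 + a2 ^ 2 + a3 ^ 2) with hGdef
  have hG : 0 ≤ G := Real.sqrt_nonneg _
  have ha2 : |a2| ≤ G := by
    rw [hGdef, ← Real.sqrt_sq_eq_abs]
    exact Real.sqrt_le_sqrt (by nlinarith [sq_nonneg a1, sq_nonneg a3])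
  have hx1 : |x1| ≤ r := by nlinarith [sq_abs x1, abs_nonneg x1, sq_nonneg x2, sq_nonneg x3]
  have hx2 : |x2| ≤ r := by nlinarith [sq_abs x2, abs_nonneg x2, sq_nonneg x1, sq_nonneg x3]
  have hx3 : |x3| ≤ r := by nlinarith [sq_abs x3, abs_nonneg x3, sq_nonneg x1, sq_nonneg x2]
  have hfrac : ∀ x w : ℝ, |x| ≤ r → |(x / r) * w| ≤ |w| := by
    intro x w hx
    rw [abs_mul, abs_div, abs_of_pos hr]
    calc |x| / r * |w| ≤ 1 * |w| := by
          apply mul_le_mul_of_nonneg_right _ (abs_nonneg w)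
          rw [div_le_one hr]; exact hx
      _ = |w| := one_mul _
  have hb1 : |a2 + x2 / r * a0| ≤ G + |a0| := by
    calc |a2 + x2 / r * a0| ≤ |a2| + |(x2 / r) * a0| := abs_add_le _ _
      _ ≤ G + |a0| := add_le_add ha2 (hfrac _ _ hx2)
  have hid : t * (a2 + x2 / r * a0) =
      (t - r) * a2 + (x1 / r) * (x1 * a2 - x2 * a1) + (x3 / r) * (x3 * a2 - x2 * a3)
        + (x2 / r) * (t * a0 + (x1 * a1 + x2 * a2 + x3 * a3)) := by
    field_simp
    linear_combination a2 * hr2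
  have htr : |t - r| ≤ Real.sqrt (1 + (t - r) ^ 2) := by
    rw [← Real.sqrt_sq_eq_abs]
    exact Real.sqrt_le_sqrt (by nlinarith)
  have hb2 : |t * (a2 + x2 / r * a0)| ≤ Real.sqrt (1 + (t - r) ^ 2) * G
      + (|x1 * a2 - x2 * a1| + |x1 * a3 - x3 * a1| + |x2 * a3 - x3 * a2|)
      + |t * a0 + (x1 * a1 + x2 * a2 + x3 * a3)| := by
    rw [hid]
    have h4 := abs4 ((t - r) * a2) ((x1 / r) * (x1 * a2 - x2 * a1))
      ((x3 / r) * (x3 * a2 - x2 * a3)) ((x2 / r) * (t * a0 + (x1 * a1 + x2 * a2 + x3 * a3)))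
    have e1 : |(t - r) * a2| ≤ Real.sqrt (1 + (t - r) ^ 2) * G := by
      rw [abs_mul]
      exact mul_le_mul htr ha2 (abs_nonneg _) (Real.sqrt_nonneg _)
    have e2 := hfrac _ (x1 * a2 - x2 * a1) hx1
    have e3 := hfrac _ (x3 * a2 - x2 * a3) hx3
    have e4 := hfrac _ (t * a0 + (x1 * a1 + x2 * a2 + x3 * a3)) hx2
    rw [abs_sub_comm (x3 * a2)] at e3
    have e5 : (0:ℝ) ≤ |x1 * a3 - x3 * a1| := abs_nonneg _
    linarith
  linarith

lemma case3 (t r x1 x2 x3 a0 a1 a2 a3 : ℝ) (hr : 0 < r)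
    (hr2 : r ^ 2 = x1 ^ 2 + x2 ^ 2 + x3 ^ 2) :
    |a3 + x3 / r * a0| ≤ (Real.sqrt (1 + t ^ 2))⁻¹ *
      (Real.sqrt (a1 ^ 2 + a2 ^ 2 + a3 ^ 2) + |a0|
        + (|x1 * a2 - x2 * a1| + |x1 * a3 - x3 * a1| + |x2 * a3 - x3 * a2|)
        + |t * a0 + (x1 * a1 + x2 * a2 + x3 * a3)|
        + Real.sqrt (1 + (t - r) ^ 2) * Real.sqrt (a1 ^ 2 + a2 ^ 2 + a3 ^ 2)) := by
  apply wrap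
  set G := Real.sqrt (a1 ^ 2 + a2 ^ 2 + a3 ^ 2) with hGdef
  have hG : 0 ≤ G := Real.sqrt_nonneg _
  have ha3 : |a3| ≤ G := by
    rw [hGdef, ← Real.sqrt_sq_eq_abs]
    exact Real.sqrt_le_sqrt (by nlinarith [sq_nonneg a1, sq_nonneg a2])
  have hx1 : |x1| ≤ r := by nlinarith [sq_abs x1, abs_nonneg x1, sq_nonneg x2, sq_nonneg x3]
  have hx2 : |x2| ≤ r := by nlinarith [sq_abs x2, abs_nonneg x2, sq_nonneg x1, sq_nonneg x3]
  have hx3 : |x3| ≤ r := by nlinarith [sq_abs x3, abs_nonneg x3, sq_nonneg x1, sq_nonneg x2]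
  have hfrac : ∀ x w : ℝ, |x| ≤ r → |(x / r) * w| ≤ |w| := by
    intro x w hx
    rw [abs_mul, abs_div, abs_of_pos hr]
    calc |x| / r * |w| ≤ 1 * |w| := by
          apply mul_le_mul_of_nonneg_right _ (abs_nonneg w)
          rw [div_le_one hr]; exact hx
      _ = |w| := one_mul _
  have hb1 : |a3 + x3 / r * a0| ≤ G + |a0| := by
    calc |a3 + x3 / r * a0| ≤ |a3| + |(x3 / r) * a0| := abs_add_le _ _
      _ ≤ G + |a0| := add_le_add ha3 (hfrac _ _ hx3)
  have hid : t * (a3 + x3 / r * a0) =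
      (t - r) * a3 + (x1 / r) * (x1 * a3 - x3 * a1) + (x2 / r) * (x2 * a3 - x3 * a2)
        + (x3 / r) * (t * a0 + (x1 * a1 + x2 * a2 + x3 * a3)) := by
    field_simp
    linear_combination a3 * hr2
  have htr : |t - r| ≤ Real.sqrt (1 + (t - r) ^ 2) := by
    rw [← Real.sqrt_sq_eq_abs]
    exact Real.sqrt_le_sqrt (by nlinarith)
  have hb2 : |t * (a3 + x3 / r * a0)| ≤ Real.sqrt (1 + (t - r) ^ 2) * G
      + (|x1 * a2 - x2 * a1| + |x1 * a3 - x3 * a1| + |x2 * a3 - x3 * a2|)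
      + |t * a0 + (x1 * a1 + x2 * a2 + x3 * a3)| := by
    rw [hid]
    have h4 := abs4 ((t - r) * a3) ((x1 / r) * (x1 * a3 - x3 * a1))
      ((x2 / r) * (x2 * a3 - x3 * a2)) ((x3 / r) * (t * a0 + (x1 * a1 + x2 * a2 + x3 * a3)))
    have e1 : |(t - r) * a3| ≤ Real.sqrt (1 + (t - r) ^ 2) * G := by
      rw [abs_mul]
      exact mul_le_mul htr ha3 (abs_nonneg _) (Real.sqrt_nonneg _)
    have e2 := hfrac _ (x1 * a3 - x3 * a1) hx1
    have e3 := hfrac _ (x2 * a3 - x3 * a2) hx2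
    have e4 := hfrac _ (t * a0 + (x1 * a1 + x2 * a2 + x3 * a3)) hx3
    have e5 : (0:ℝ) ≤ |x1 * a2 - x2 * a1| := abs_nonneg _
    linarith
  linarith

/-- Pointwise bound for the good derivatives:
|T_k v| ≤ C⟨t⟩⁻¹(|∇_x v| + |∂_t v| + Σ_{i<j}|Ω_{ij}v| + |Sv| + ⟨t−r⟩|∇_x v|). -/
theorem good_derivative_decay :
    ∃ C > 0, ∀ v : Pt → ℝ, ContDiff ℝ (⊤ : ℕ∞) v → ∀ p : Pt, rad p ≠ 0 →
      ∀ k : Fin 4, k ≠ 0 →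
        |Tgood k v p| ≤ C * (jap (p 0))⁻¹ *
          (Gradnorm v p + |pd 0 v p|
            + (|Om 1 2 v p| + |Om 1 3 v p| + |Om 2 3 v p|)
            + |Sop v p| + jap (p 0 - rad p) * Gradnorm v p) := by
  refine ⟨1, one_pos, ?_⟩
  intro v _ p hp k hk
  have hr : 0 < rad p := lt_of_le_of_ne (Real.sqrt_nonneg _) (Ne.symm hp)
  have hr2 : (rad p) ^ 2 = (p 1) ^ 2 + (p 2) ^ 2 + (p 3) ^ 2 := Real.sq_sqrt (by positivity)
  simp only [Tgood, Om, Sop, Gradnorm, jap, one_mul]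
  fin_cases k
  · exact absurd rfl hk
  · exact case1 (p 0) (rad p) (p 1) (p 2) (p 3) (pd 0 v p) (pd 1 v p) (pd 2 v p) (pd 3 v p) hr hr2
  · exact case2 (p 0) (rad p) (p 1) (p 2) (p 3) (pd 0 v p) (pd 1 v p) (pd 2 v p) (pd 3 v p) hr hr2
  · exact case3 (p 0) (rad p) (p 1) (p 2) (p 3) (pd 0 v p) (pd 1 v p) (pd 2 v p) (pd 3 v p) hr hr2
end
end

section
/- There exists a constant C > 0 such that for every v ∈ C_0^∞(ℝ³) and every r > 0, the trace-type inequality r^{1/2} ‖v(r·)‖_{L⁴(S²)} ≤ C ‖∇v‖_{L²(ℝ³)} holds, where v(r·) denotes the restriction of v to the sphere of radius r, viewed as a function on the unit sphere S². -/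
noncomputable section
open MeasureTheory
open scoped NNReal ENNReal

abbrev E3 := EuclideanSpace ℝ (Fin 3)

namespace TraceAux

open Filter Set

/-- 1D calculus lemma. -/
lemma oneD (g g' : ℝ → ℝ) (hg : ∀ t, HasDerivAt g (g' t) t)
    (hg' : Continuous g') (R : ℝ) (hR : 0 ≤ R) (h0 : ∀ t : ℝ, R < |t| → g t = 0) (t₀ : ℝ) :
    ENNReal.ofReal (|g t₀| ^ 4) ≤ ∫⁻ t : ℝ, ENNReal.ofReal (4 * |g t| ^ 3 * |g' t|) := by
  have hgc : Continuous g := continuous_iff_continuousAt.2 fun t => (hg t).continuousAt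
  set F : ℝ → ℝ := fun t => g t ^ 4 with hF
  set F' : ℝ → ℝ := fun t => 4 * g t ^ 3 * g' t with hF'
  have hder : ∀ t : ℝ, HasDerivAt F (F' t) t := by
    intro t
    have h := (hg t).pow 4
    have e : (4:ℕ) * g t ^ (4-1) * g' t = F' t := by norm_num [hF']
    rw [e] at h; exact h
  have hF'c : Continuous F' := by fun_prop
  have hF'supp : HasCompactSupport F' := by
    apply HasCompactSupport.intro (isCompact_Icc (a := -R) (b := R))
    intro t ht
    have : R < |t| := by
      simp only [mem_Icc, not_and_or, not_le] at ht
      rcases ht with h | h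
      · rw [abs_of_neg (by linarith)]; linarith
      · rw [abs_of_pos (by linarith)]; linarith
    simp [hF', h0 t this]
  have hF'int : Integrable F' := hF'c.integrable_of_hasCompactSupport hF'supp
  have habs : ∀ t, |F' t| = 4 * |g t| ^ 3 * |g' t| := by
    intro t
    simp only [hF', abs_mul, abs_pow]
    norm_num
  have htend : Tendsto F atTop (nhds 0) := by
    have : ∀ᶠ t in atTop, F t = 0 := by
      filter_upwards [eventually_ge_atTop (R + 1)] with t ht
      have : g t = 0 := h0 t (by rw [abs_of_pos (by linarith)]; linarith)
      simp [hF, this]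
    exact Tendsto.congr' (EventuallyEq.symm this) tendsto_const_nhds
  have key : ∫ t in Ioi t₀, F' t = 0 - F t₀ :=
    integral_Ioi_of_hasDerivAt_of_tendsto (hgc.pow 4).continuousWithinAt
      (fun x _ => hder x) hF'int.integrableOn htend
  have h1 : |g t₀| ^ 4 = F t₀ := by
    rw [hF]; rw [← abs_pow]
    exact abs_of_nonneg (by positivity)
  have h2 : F t₀ ≤ ∫ t, |F' t| := by
    calc F t₀ = |∫ t in Ioi t₀, F' t| := by rw [key]; rw [zero_sub, abs_neg, abs_of_nonneg (by positivity)]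
    _ ≤ ∫ t in Ioi t₀, |F' t| := by
        simpa using norm_integral_le_integral_norm (μ := volume.restrict (Ioi t₀)) F'
    _ ≤ ∫ t, |F' t| := setIntegral_le_integral hF'int.abs (Eventually.of_forall fun t => abs_nonneg _)
  calc ENNReal.ofReal (|g t₀| ^ 4) ≤ ENNReal.ofReal (∫ t, |F' t|) := by
        rw [h1]; exact ENNReal.ofReal_le_ofReal h2
  _ = ∫⁻ t, ENNReal.ofReal (|F' t|) :=
      ofReal_integral_eq_lintegral_ofReal hF'int.abs (Eventually.of_forall fun t => abs_nonneg _)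
  _ = _ := by simp_rw [habs]

/-- basis direction -/
def e3 (i : Fin 3) : E3 := EuclideanSpace.single i 1

/-- insertion map -/
def ins (i : Fin 3) (u : Fin 2 → ℝ) (t : ℝ) : E3 :=
  (WithLp.equiv 2 (Fin 3 → ℝ)).symm (Fin.insertNth i t u)

lemma ins_apply (i : Fin 3) (u : Fin 2 → ℝ) (t : ℝ) (j : Fin 3) :
    ins i u t j = Fin.insertNth (α := fun _ : Fin 3 => ℝ) i t u j := rfl

lemma e3_ext {x y : E3} (h : ∀ j, x j = y j) : x = y := (WithLp.equiv 2 _).injective (funext h)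

lemma ins_smul (i : Fin 3) (u : Fin 2 → ℝ) (t : ℝ) (r : ℝ) :
    r • ins i u t = ins i (r • u) (r * t) := by
  apply e3_ext
  intro j
  rw [PiLp.smul_apply, ins_apply, ins_apply]
  refine Fin.succAboveCases i ?_ (fun k => ?_) j
  · simp [Fin.insertNth_apply_same, smul_eq_mul]
  · simp [Fin.insertNth_apply_succAbove, smul_eq_mul]

lemma ins_decomp (i : Fin 3) (u : Fin 2 → ℝ) (t : ℝ) :
    ins i u t = ins i u 0 + t • e3 i := by
  apply e3_ext
  intro j
  rw [PiLp.add_apply, PiLp.smul_apply, ins_apply, ins_apply]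
  refine Fin.succAboveCases i ?_ (fun k => ?_) j
  · simp [Fin.insertNth_apply_same, e3, EuclideanSpace.single_apply]
  · simp [Fin.insertNth_apply_succAbove, e3, EuclideanSpace.single_apply,
      (Fin.succAbove_ne i k)]
lemma ins_sub (i : Fin 3) (u w : Fin 2 → ℝ) (t s : ℝ) :
    ins i u t - ins i w s = ins i (u - w) (t - s) := by
  apply e3_ext
  intro j
  rw [PiLp.sub_apply, ins_apply, ins_apply, ins_apply]
  refine Fin.succAboveCases i ?_ (fun k => ?_) j
  · simp [Fin.insertNth_apply_same]
  · simp [Fin.insertNth_apply_succAbove]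

lemma ins_continuous (i : Fin 3) : Continuous fun p : (Fin 2 → ℝ) × ℝ => ins i p.1 p.2 := by
  unfold ins
  exact (PiLp.continuous_toLp 2 (fun _ : Fin 3 => ℝ)).comp
    (Continuous.finInsertNth (A := fun _ : Fin 3 => ℝ) i continuous_snd continuous_fst)

lemma norm_le_sum3 (x : E3) : ‖x‖ ≤ |x 0| + |x 1| + |x 2| := by
  rw [EuclideanSpace.norm_eq]
  have h : ∑ j : Fin 3, ‖x j‖ ^ 2 ≤ (|x 0| + |x 1| + |x 2|) ^ 2 := by
    rw [Fin.sum_univ_three]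
    simp only [Real.norm_eq_abs]
    nlinarith [abs_nonneg (x 0), abs_nonneg (x 1), abs_nonneg (x 2)]
  calc √(∑ j : Fin 3, ‖x j‖ ^ 2) ≤ √((|x 0| + |x 1| + |x 2|) ^ 2) := Real.sqrt_le_sqrt h
  _ = |x 0| + |x 1| + |x 2| := Real.sqrt_sq (by positivity)

lemma ins_coord_le (i : Fin 3) (u : Fin 2 → ℝ) (t : ℝ) (j : Fin 3) :
    |ins i u t j| ≤ |t| + ‖u‖ := by
  rw [ins_apply]
  refine Fin.succAboveCases i ?_ (fun k => ?_) j
  · rw [Fin.insertNth_apply_same]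
    have := norm_nonneg u; linarith
  · rw [Fin.insertNth_apply_succAbove]
    have := norm_le_pi_norm u k
    rw [Real.norm_eq_abs] at this
    have := abs_nonneg t
    linarith [norm_le_pi_norm u k]

lemma ins_norm_le (i : Fin 3) (u : Fin 2 → ℝ) (t : ℝ) :
    ‖ins i u t‖ ≤ 3 * (|t| + ‖u‖) := by
  have := norm_le_sum3 (ins i u t)
  have h0 := ins_coord_le i u t 0
  have h1 := ins_coord_le i u t 1
  have h2 := ins_coord_le i u t 2
  linarith


/-- pointwise FTC bound along a unit direction -/
lemma pointB {v : E3 → ℝ} (hv : ContDiff ℝ (⊤ : ℕ∞) v) (hs : HasCompactSupport v)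
    (e : E3) (he : ‖e‖ = 1) (p : E3) (t₀ : ℝ) :
    ENNReal.ofReal (|v (p + t₀ • e)| ^ 4)
      ≤ ∫⁻ t : ℝ, ENNReal.ofReal (4 * |v (p + t • e)| ^ 3 * ‖fderiv ℝ v (p + t • e)‖) := by
  set g : ℝ → ℝ := fun t => v (p + t • e) with hgdef
  set g' : ℝ → ℝ := fun t => fderiv ℝ v (p + t • e) e with hg'def
  have hline : ∀ t : ℝ, HasDerivAt (fun s : ℝ => p + s • e) e t := by
    intro t
    simpa using ((hasDerivAt_id t).smul_const e).const_add p
  have hg : ∀ t, HasDerivAt g (g' t) t := by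
    intro t
    exact ((hv.differentiable (by simp) (p + t • e)).hasFDerivAt).comp_hasDerivAt t (hline t)
  have hg' : Continuous g' := by
    have h1 : Continuous fun t : ℝ => p + t • e := by fun_prop
    exact ((hv.continuous_fderiv (by simp)).comp h1).clm_apply continuous_const
  obtain ⟨R0, hR0⟩ := hs.isCompact.isBounded.subset_closedBall 0
  set R : ℝ := max (R0 + ‖p‖) 0 with hRdef
  have h0 : ∀ t : ℝ, R < |t| → g t = 0 := by
    intro t ht
    by_contra hne
    have hmem : p + t • e ∈ tsupport v := subset_tsupport v hne
    have h1 : ‖p + t • e‖ ≤ R0 := by simpa using hR0 hmem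
    have h2 : |t| ≤ ‖p + t • e‖ + ‖p‖ := by
      have h4 : ‖(p + t • e) - p‖ ≤ ‖p + t • e‖ + ‖p‖ := norm_sub_le _ _
      simpa [norm_smul, he] using h4
    have : |t| ≤ R := by
      rw [hRdef]
      refine le_max_of_le_left ?_
      linarith
    linarith
  have := oneD g g' hg hg' R (le_max_right _ _) h0 t₀
  refine le_trans this (lintegral_mono fun t => ENNReal.ofReal_le_ofReal ?_)
  have hb : |g' t| ≤ ‖fderiv ℝ v (p + t • e)‖ := by
    calc |g' t| ≤ ‖fderiv ℝ v (p + t • e)‖ * ‖e‖ := (fderiv ℝ v (p + t • e)).le_opNorm e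
    _ = _ := by rw [he, mul_one]
  have h3 : (0:ℝ) ≤ 4 * |g t| ^ 3 := by positivity
  calc 4 * |g t| ^ 3 * |g' t| ≤ 4 * |g t| ^ 3 * ‖fderiv ℝ v (p + t • e)‖ :=
        mul_le_mul_of_nonneg_left hb h3
  _ = _ := rfl

def fcap (u : Fin 2 → ℝ) : ℝ := Real.sqrt (1 - u 0 ^ 2 - u 1 ^ 2)

def Dcap : Set (Fin 2 → ℝ) := {u | u 0 ^ 2 + u 1 ^ 2 ≤ 2/3}

def φcap (i : Fin 3) (ε : ℝ) (u : Fin 2 → ℝ) : E3 := ins i u (ε * fcap u)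

def cap (i : Fin 3) (ε : ℝ) : Set E3 :=
  {ω : E3 | ‖ω‖ = 1 ∧ 1 ≤ 3 * (ω i) ^ 2 ∧ 0 ≤ ε * ω i}

lemma sqrt_diff_le {a b : ℝ} (ha3 : 1/3 ≤ a) (hb3 : 1/3 ≤ b) :
    |Real.sqrt a - Real.sqrt b| ≤ |a - b| := by
  have ha0 : (0:ℝ) ≤ a := by linarith
  have hb0 : (0:ℝ) ≤ b := by linarith
  have hsa : Real.sqrt a ^ 2 = a := Real.sq_sqrt ha0
  have hsb : Real.sqrt b ^ 2 = b := Real.sq_sqrt hb0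
  have hsa2 : (1:ℝ)/2 ≤ Real.sqrt a := by
    rw [show (1:ℝ)/2 = Real.sqrt (1/4) by
      rw [show (1:ℝ)/4 = (1/2)^2 by norm_num, Real.sqrt_sq (by norm_num)]]
    exact Real.sqrt_le_sqrt (by linarith)
  have hsb2 : (1:ℝ)/2 ≤ Real.sqrt b := by
    rw [show (1:ℝ)/2 = Real.sqrt (1/4) by
      rw [show (1:ℝ)/4 = (1/2)^2 by norm_num, Real.sqrt_sq (by norm_num)]]
    exact Real.sqrt_le_sqrt (by linarith)
  have key : |Real.sqrt a - Real.sqrt b| * (Real.sqrt a + Real.sqrt b) = |a - b| := by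
    have hst : (Real.sqrt a - Real.sqrt b) * (Real.sqrt a + Real.sqrt b) = a - b := by
      linear_combination hsa - hsb
    have habs0 : (0:ℝ) ≤ Real.sqrt a + Real.sqrt b := by positivity
    calc |Real.sqrt a - Real.sqrt b| * (Real.sqrt a + Real.sqrt b)
        = |Real.sqrt a - Real.sqrt b| * |Real.sqrt a + Real.sqrt b| := by
          rw [abs_of_nonneg habs0]
      _ = |(Real.sqrt a - Real.sqrt b) * (Real.sqrt a + Real.sqrt b)| := (abs_mul _ _).symm
      _ = |a - b| := by rw [hst]
  nlinarith [abs_nonneg (Real.sqrt a - Real.sqrt b)]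

lemma fcap_lip {u w : Fin 2 → ℝ} (hu : u ∈ Dcap) (hw : w ∈ Dcap) :
    |fcap u - fcap w| ≤ 4 * ‖u - w‖ := by
  have hu' : u 0 ^ 2 + u 1 ^ 2 ≤ 2/3 := hu
  have hw' : w 0 ^ 2 + w 1 ^ 2 ≤ 2/3 := hw
  have h1 : |fcap u - fcap w| ≤ |(1 - u 0 ^ 2 - u 1 ^ 2) - (1 - w 0 ^ 2 - w 1 ^ 2)| := by
    simp only [fcap]
    exact sqrt_diff_le (by linarith) (by linarith)
  have d0 : |u 0 - w 0| ≤ ‖u - w‖ := by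
    have := norm_le_pi_norm (u - w) 0
    simpa [Real.norm_eq_abs] using this
  have d1 : |u 1 - w 1| ≤ ‖u - w‖ := by
    have := norm_le_pi_norm (u - w) 1
    simpa [Real.norm_eq_abs] using this
  have hu0 : |u 0| ≤ 1 := by nlinarith [sq_abs (u 0), sq_nonneg (u 1), abs_nonneg (u 0), sq_nonneg (|u 0| - 1)]
  have hu1 : |u 1| ≤ 1 := by nlinarith [sq_abs (u 1), sq_nonneg (u 0), abs_nonneg (u 1), sq_nonneg (|u 1| - 1)]
  have hw0 : |w 0| ≤ 1 := by nlinarith [sq_abs (w 0), sq_nonneg (w 1), abs_nonneg (w 0), sq_nonneg (|w 0| - 1)]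
  have hw1 : |w 1| ≤ 1 := by nlinarith [sq_abs (w 1), sq_nonneg (w 0), abs_nonneg (w 1), sq_nonneg (|w 1| - 1)]
  have k0 : |w 0 ^ 2 - u 0 ^ 2| ≤ 2 * ‖u - w‖ := by
    rw [show w 0 ^ 2 - u 0 ^ 2 = (w 0 - u 0) * (w 0 + u 0) by ring, abs_mul]
    have e0 : |w 0 - u 0| ≤ ‖u - w‖ := by rw [abs_sub_comm]; exact d0
    have e1 : |w 0 + u 0| ≤ 2 := by
      calc |w 0 + u 0| ≤ |w 0| + |u 0| := abs_add_le _ _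
      _ ≤ 2 := by linarith
    calc |w 0 - u 0| * |w 0 + u 0| ≤ ‖u - w‖ * 2 :=
          mul_le_mul e0 e1 (abs_nonneg _) (norm_nonneg _)
    _ = 2 * ‖u - w‖ := by ring
  have k1 : |w 1 ^ 2 - u 1 ^ 2| ≤ 2 * ‖u - w‖ := by
    rw [show w 1 ^ 2 - u 1 ^ 2 = (w 1 - u 1) * (w 1 + u 1) by ring, abs_mul]
    have e0 : |w 1 - u 1| ≤ ‖u - w‖ := by rw [abs_sub_comm]; exact d1
    have e1 : |w 1 + u 1| ≤ 2 := by
      calc |w 1 + u 1| ≤ |w 1| + |u 1| := abs_add_le _ _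
      _ ≤ 2 := by linarith
    calc |w 1 - u 1| * |w 1 + u 1| ≤ ‖u - w‖ * 2 :=
          mul_le_mul e0 e1 (abs_nonneg _) (norm_nonneg _)
    _ = 2 * ‖u - w‖ := by ring
  have h2 : |(1 - u 0 ^ 2 - u 1 ^ 2) - (1 - w 0 ^ 2 - w 1 ^ 2)| ≤ 4 * ‖u - w‖ := by
    rw [show (1 - u 0 ^ 2 - u 1 ^ 2) - (1 - w 0 ^ 2 - w 1 ^ 2)
        = (w 0 ^ 2 - u 0 ^ 2) + (w 1 ^ 2 - u 1 ^ 2) by ring]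
    calc |(w 0 ^ 2 - u 0 ^ 2) + (w 1 ^ 2 - u 1 ^ 2)|
        ≤ |w 0 ^ 2 - u 0 ^ 2| + |w 1 ^ 2 - u 1 ^ 2| := abs_add_le _ _
    _ ≤ 4 * ‖u - w‖ := by linarith
  linarith

lemma φcap_lip (i : Fin 3) (ε : ℝ) (hε : |ε| = 1) :
    LipschitzOnWith 15 (φcap i ε) Dcap := by
  rw [lipschitzOnWith_iff_dist_le_mul]
  intro u hu w hw
  rw [dist_eq_norm, dist_eq_norm]
  have heq : φcap i ε u - φcap i ε w = ins i (u - w) (ε * fcap u - ε * fcap w) :=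
    ins_sub i u w _ _
  rw [heq]
  have h1 : ‖ins i (u - w) (ε * fcap u - ε * fcap w)‖
      ≤ 3 * (|ε * fcap u - ε * fcap w| + ‖u - w‖) := ins_norm_le _ _ _
  have h2 : |ε * fcap u - ε * fcap w| = |fcap u - fcap w| := by
    rw [← mul_sub, abs_mul, hε, one_mul]
  have h3 := fcap_lip hu hw
  have hc : ((15:ℝ≥0):ℝ) = 15 := by norm_num
  rw [hc]
  rw [h2] at h1
  linarith

lemma cap_subset_image (i : Fin 3) (ε : ℝ) (hε : ε = 1 ∨ ε = -1) :
    cap i ε ⊆ φcap i ε '' Dcap := by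
  rintro ω ⟨hnorm, hbig, hsign⟩
  have hε2 : ε ^ 2 = 1 := by rcases hε with h | h <;> simp [h]
  have hεabs : |ε| = 1 := by rcases hε with h | h <;> simp [h]
  set u : Fin 2 → ℝ := fun k => ω (i.succAbove k) with hu
  have hsum : ∑ j : Fin 3, ω j ^ 2 = 1 := by
    have h := EuclideanSpace.norm_eq ω
    rw [hnorm] at h
    have h3 := Real.sqrt_eq_one.mp h.symm
    simpa [Real.norm_eq_abs, sq_abs] using h3
  have hdecomp : ω i ^ 2 + (u 0 ^ 2 + u 1 ^ 2) = 1 := by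
    have := Fin.sum_univ_succAbove (fun j => ω j ^ 2) i
    rw [this] at hsum
    simpa [hu, Fin.sum_univ_two] using hsum
  have hDu : u ∈ Dcap := by
    have : (1:ℝ)/3 ≤ ω i ^ 2 := by linarith
    simp only [Dcap, Set.mem_setOf_eq]
    linarith
  refine ⟨u, hDu, ?_⟩
  have hf : fcap u = ε * ω i := by
    have h1 : 1 - u 0 ^ 2 - u 1 ^ 2 = ω i ^ 2 := by linarith
    have h2 : fcap u = |ω i| := by
      rw [fcap, h1, Real.sqrt_sq_eq_abs]
    rw [h2]
    have : |ε * ω i| = |ω i| := by rw [abs_mul, hεabs, one_mul]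
    rw [← this, abs_of_nonneg hsign]
  have : ε * fcap u = ω i := by
    rw [hf, ← mul_assoc, ← sq]
    rw [hε2, one_mul]
  rw [φcap, this]
  apply e3_ext
  intro j
  rw [ins_apply]
  refine Fin.succAboveCases i ?_ (fun k => ?_) j
  · rw [Fin.insertNth_apply_same]
  · rw [Fin.insertNth_apply_succAbove]

lemma sphere_subset_caps :
    Metric.sphere (0 : E3) 1 ⊆ ⋃ c : Fin 3 × Bool, cap c.1 (if c.2 then 1 else -1) := by
  intro ω hω
  have hnorm : ‖ω‖ = 1 := mem_sphere_zero_iff_norm.mp hω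
  have hsum : ∑ j : Fin 3, ω j ^ 2 = 1 := by
    have h := EuclideanSpace.norm_eq ω
    rw [hnorm] at h
    have h3 := Real.sqrt_eq_one.mp h.symm
    simpa [Real.norm_eq_abs, sq_abs] using h3
  have hex : ∃ j : Fin 3, 1 ≤ 3 * ω j ^ 2 := by
    by_contra hcon
    push_neg at hcon
    have h0 := hcon 0
    have h1 := hcon 1
    have h2 := hcon 2
    rw [Fin.sum_univ_three] at hsum
    linarith
  obtain ⟨j, hj⟩ := hex
  by_cases hsgn : 0 ≤ ω j
  · refine Set.mem_iUnion.mpr ⟨⟨j, true⟩, ?_⟩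
    show ω ∈ cap j (if true then 1 else -1)
    rw [if_pos rfl]
    exact ⟨hnorm, hj, by simpa using hsgn⟩
  · push_neg at hsgn
    refine Set.mem_iUnion.mpr ⟨⟨j, false⟩, ?_⟩
    show ω ∈ cap j (if false then 1 else -1)
    rw [if_neg (by simp)]
    refine ⟨hnorm, hj, ?_⟩
    rw [neg_one_mul, neg_nonneg]
    linarith

lemma fubini3 (i : Fin 3) (H : E3 → ℝ≥0∞) (hH : Measurable H) :
    ∫⁻ t : ℝ, ∫⁻ u : Fin 2 → ℝ, H (ins i u t) = ∫⁻ x : E3, H x := by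
  have e1 : ∫⁻ y : Fin 3 → ℝ, H ((MeasurableEquiv.toLp 2 (Fin 3 → ℝ)) y)
      = ∫⁻ x : E3, H x :=
    (PiLp.volume_preserving_toLp (Fin 3)).lintegral_comp hH
  have hH2 : Measurable fun y : Fin 3 → ℝ =>
      H ((MeasurableEquiv.toLp 2 (Fin 3 → ℝ)) y) :=
    hH.comp (MeasurableEquiv.toLp 2 (Fin 3 → ℝ)).measurable
  have e2 : ∫⁻ z : ℝ × (Fin 2 → ℝ),
      H ((MeasurableEquiv.toLp 2 (Fin 3 → ℝ))
        ((MeasurableEquiv.piFinSuccAbove (fun _ : Fin 3 => ℝ) i).symm z))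
      = ∫⁻ y : Fin 3 → ℝ, H ((MeasurableEquiv.toLp 2 (Fin 3 → ℝ)) y) :=
    ((volume_preserving_piFinSuccAbove (fun _ : Fin 3 => ℝ) i).symm _).lintegral_comp hH2
  have hkey : ∀ (t : ℝ) (u : Fin 2 → ℝ),
      (MeasurableEquiv.toLp 2 (Fin 3 → ℝ))
        ((MeasurableEquiv.piFinSuccAbove (fun _ : Fin 3 => ℝ) i).symm (t, u)) = ins i u t := by
    intro t u
    rw [MeasurableEquiv.piFinSuccAbove_symm_apply]
    rfl
  have hmeas : Measurable fun z : ℝ × (Fin 2 → ℝ) => H (ins i z.2 z.1) := by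
    have : Measurable fun z : ℝ × (Fin 2 → ℝ) => ins i z.2 z.1 :=
      ((ins_continuous i).comp (continuous_snd.prodMk continuous_fst)).measurable
    exact hH.comp this
  calc ∫⁻ t : ℝ, ∫⁻ u : Fin 2 → ℝ, H (ins i u t)
      = ∫⁻ z : ℝ × (Fin 2 → ℝ), H (ins i z.2 z.1) ∂((volume : Measure ℝ).prod volume) := by
        rw [lintegral_prod _ hmeas.aemeasurable]
  _ = ∫⁻ z : ℝ × (Fin 2 → ℝ), H (ins i z.2 z.1) := by
        rw [← Measure.volume_eq_prod]
  _ = ∫⁻ y : Fin 3 → ℝ, H ((MeasurableEquiv.toLp 2 (Fin 3 → ℝ)) y) := by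
        rw [← e2]
        congr 1
  _ = ∫⁻ x : E3, H x := e1

lemma fcap_continuous : Continuous fcap := by
  apply Real.continuous_sqrt.comp
  fun_prop

lemma φcap_continuous (i : Fin 3) (ε : ℝ) : Continuous (φcap i ε) := by
  have h : Continuous fun u : Fin 2 → ℝ => ins i u (ε * fcap u) :=
    (ins_continuous i).comp (continuous_id.prodMk (continuous_const.mul fcap_continuous))
  exact h

lemma measure_cap_le (i : Fin 3) (ε : ℝ) (hε : ε = 1 ∨ ε = -1) :
    (μH[2] : Measure E3).restrict (cap i ε) ≤
      (225 : ℝ≥0∞) • Measure.map (φcap i ε) (volume.restrict Dcap) := by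
  have hεabs : |ε| = 1 := by rcases hε with h|h <;> simp [h]
  have hφm : Measurable (φcap i ε) := (φcap_continuous i ε).measurable
  rw [Measure.le_iff]
  intro s hs
  have hmap : ((225:ℝ≥0∞) • Measure.map (φcap i ε) (volume.restrict Dcap)) s
      = 225 * volume (Dcap ∩ φcap i ε ⁻¹' s) := by
    rw [Measure.smul_apply, Measure.map_apply hφm hs, Measure.restrict_apply (hφm hs)]
    rw [smul_eq_mul, Set.inter_comm]
  rw [hmap, Measure.restrict_apply hs]
  have hsub : s ∩ cap i ε ⊆ φcap i ε '' (Dcap ∩ φcap i ε ⁻¹' s) := by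
    rintro ω ⟨hωs, hωc⟩
    obtain ⟨u, hu, rfl⟩ := cap_subset_image i ε hε hωc
    exact ⟨u, ⟨hu, hωs⟩, rfl⟩
  have hconst : ((15:ℝ≥0):ℝ≥0∞) ^ (2:ℝ) = 225 := by
    rw [show (2:ℝ) = ((2:ℕ):ℝ) by norm_num, ENNReal.rpow_natCast]
    norm_num
  have hpi : (μH[(2:ℝ)] : Measure (Fin 2 → ℝ)) = volume := by
    have := hausdorffMeasure_pi_real (ι := Fin 2)
    simpa using this
  calc μH[2] (s ∩ cap i ε)
      ≤ μH[2] (φcap i ε '' (Dcap ∩ φcap i ε ⁻¹' s)) := measure_mono hsub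
  _ ≤ ((15:ℝ≥0):ℝ≥0∞) ^ (2:ℝ) * μH[2] (Dcap ∩ φcap i ε ⁻¹' s) :=
      ((φcap_lip i ε hεabs).mono Set.inter_subset_left).hausdorffMeasure_image_le (by norm_num)
  _ = 225 * volume (Dcap ∩ φcap i ε ⁻¹' s) := by rw [hconst, hpi]

lemma capIntBound (i : Fin 3) (ε : ℝ) (hε : ε = 1 ∨ ε = -1)
    (g : E3 → ℝ≥0∞) (hg : Measurable g) :
    ∫⁻ ω in cap i ε, g ω ∂μH[2] ≤ 225 * ∫⁻ u, g (φcap i ε u) := by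
  calc ∫⁻ ω in cap i ε, g ω ∂μH[2]
      ≤ ∫⁻ ω, g ω ∂((225:ℝ≥0∞) • Measure.map (φcap i ε) (volume.restrict Dcap)) :=
        lintegral_mono' (measure_cap_le i ε hε) le_rfl
  _ = 225 * ∫⁻ u in Dcap, g (φcap i ε u) := by
        rw [lintegral_smul_measure, lintegral_map hg (φcap_continuous i ε).measurable, smul_eq_mul]
  _ ≤ 225 * ∫⁻ u, g (φcap i ε u) := by
        exact mul_le_mul_right (lintegral_mono' Measure.restrict_le_self le_rfl) _

/-- The integrand for the gradient bound. -/
def Hfun (v : E3 → ℝ) (x : E3) : ℝ≥0∞ := ENNReal.ofReal (4 * |v x| ^ 3 * ‖fderiv ℝ v x‖)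

lemma Hfun_measurable {v : E3 → ℝ} (hv : ContDiff ℝ (⊤ : ℕ∞) v) : Measurable (Hfun v) := by
  apply (ENNReal.continuous_ofReal.comp ?_).measurable
  exact (continuous_const.mul ((hv.continuous.abs).pow 3)).mul
    (hv.continuous_fderiv (by simp)).norm

lemma capMain {v : E3 → ℝ} (hv : ContDiff ℝ (⊤ : ℕ∞) v) (hsupp : HasCompactSupport v)
    (i : Fin 3) (ε : ℝ) (hε : ε = 1 ∨ ε = -1) {r : ℝ} (hr : 0 < r) :
    ∫⁻ ω in cap i ε, ENNReal.ofReal (|v (r • ω)| ^ 4) ∂μH[2]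
      ≤ ENNReal.ofReal ((r ^ 2)⁻¹) * (225 * ∫⁻ x, Hfun v x) := by
  have hmeasH : Measurable (Hfun v) := Hfun_measurable hv
  have hg : Measurable fun ω : E3 => ENNReal.ofReal (|v (r • ω)| ^ 4) := by
    apply (ENNReal.continuous_ofReal.comp ?_).measurable
    exact ((hv.continuous.comp (continuous_const_smul r)).abs.pow 4)
  refine le_trans (capIntBound i ε hε _ hg) ?_
  set F : (Fin 2 → ℝ) → ℝ≥0∞ := fun w => ∫⁻ t : ℝ, Hfun v (ins i w t) with hF
  have hins : Measurable fun z : (Fin 2 → ℝ) × ℝ => Hfun v (ins i z.1 z.2) :=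
    hmeasH.comp (ins_continuous i).measurable
  have hFmeas : Measurable F := Measurable.lintegral_prod_right hins
  have step1 : ∀ u : Fin 2 → ℝ, ENNReal.ofReal (|v (r • φcap i ε u)| ^ 4) ≤ F (r • u) := by
    intro u
    have h1 : r • φcap i ε u = ins i (r • u) 0 + (r * (ε * fcap u)) • e3 i := by
      rw [φcap, ins_smul, ins_decomp]
    rw [h1]
    refine le_trans (pointB hv hsupp (e3 i)
      (by simp [e3, EuclideanSpace.norm_single]) (ins i (r • u) 0) (r * (ε * fcap u))) ?_
    apply le_of_eq
    rw [hF]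
    congr 1
    funext t
    rw [← ins_decomp]
    rfl
  have step2 : ∫⁻ u, ENNReal.ofReal (|v (r • φcap i ε u)| ^ 4) ≤ ∫⁻ u, F (r • u) :=
    lintegral_mono step1
  have step3 : ∫⁻ u : Fin 2 → ℝ, F (r • u) = ENNReal.ofReal ((r ^ 2)⁻¹) * ∫⁻ w, F w := by
    have hmap := Measure.map_addHaar_smul (volume : Measure (Fin 2 → ℝ)) (ne_of_gt hr)
    rw [Module.finrank_fin_fun ℝ] at hmap
    calc ∫⁻ u : Fin 2 → ℝ, F (r • u)
        = ∫⁻ w, F w ∂(Measure.map (fun x : Fin 2 → ℝ => r • x) volume) :=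
          (lintegral_map hFmeas (measurable_const_smul r)).symm
    _ = ENNReal.ofReal |(r ^ 2)⁻¹| * ∫⁻ w, F w := by
          rw [hmap, lintegral_smul_measure, smul_eq_mul]
    _ = ENNReal.ofReal ((r ^ 2)⁻¹) * ∫⁻ w, F w := by
          rw [abs_of_nonneg (by positivity)]
  have step4 : ∫⁻ w, F w = ∫⁻ x, Hfun v x := by
    rw [hF]
    have hswap : ∫⁻ w, ∫⁻ t, Hfun v (ins i w t) = ∫⁻ t, ∫⁻ w, Hfun v (ins i w t) :=
      lintegral_lintegral_swap hins.aemeasurable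
    rw [hswap, fubini3 i _ hmeasH]
  calc (225:ℝ≥0∞) * ∫⁻ u, ENNReal.ofReal (|v (r • φcap i ε u)| ^ 4)
      ≤ 225 * ∫⁻ u, F (r • u) := mul_le_mul_right step2 _
  _ = 225 * (ENNReal.ofReal ((r ^ 2)⁻¹) * ∫⁻ x, Hfun v x) := by rw [step3, step4]
  _ = ENNReal.ofReal ((r ^ 2)⁻¹) * (225 * ∫⁻ x, Hfun v x) := by ring

/-- Sobolev constant -/
def Csob : ℝ≥0∞ :=
  4 * ((SNormLESNormFDerivOfEqConst ℝ (volume : Measure E3) ((2:ℝ≥0):ℝ) : ℝ≥0) : ℝ≥0∞) ^ (3:ℝ)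

lemma Csob_ne_top : Csob ≠ ⊤ := by
  rw [Csob]
  apply ENNReal.mul_ne_top (by norm_num)
  exact ENNReal.rpow_ne_top_of_nonneg (by norm_num) ENNReal.coe_ne_top

lemma globalBound {v : E3 → ℝ} (hv : ContDiff ℝ (⊤ : ℕ∞) v) (hsupp : HasCompactSupport v) :
    ∫⁻ x, Hfun v x
      ≤ Csob * (∫⁻ x, ENNReal.ofReal (‖fderiv ℝ v x‖ ^ 2)) ^ (2:ℕ) := by
  set T : ℝ≥0∞ := ∫⁻ x, ((‖v x‖₊ : ℝ≥0∞)) ^ (6:ℝ) with hT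
  set U : ℝ≥0∞ := ∫⁻ x, ((‖fderiv ℝ v x‖₊ : ℝ≥0∞)) ^ (2:ℝ) with hU
  have hvmeas : Measurable fun x => (ENNReal.ofReal (|v x| ^ 3)) :=
    (ENNReal.continuous_ofReal.comp ((hv.continuous.abs).pow 3)).measurable
  have hgmeas : Measurable fun x => (ENNReal.ofReal ‖fderiv ℝ v x‖) :=
    (ENNReal.continuous_ofReal.comp (hv.continuous_fderiv (by simp)).norm).measurable
  -- pointwise splitting
  have hsplit : ∀ x : E3, Hfun v x
      = 4 * (ENNReal.ofReal (|v x| ^ 3) * ENNReal.ofReal ‖fderiv ℝ v x‖) := by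
    intro x
    rw [Hfun, ENNReal.ofReal_mul (by positivity), ENNReal.ofReal_mul (by norm_num)]
    rw [mul_assoc]
    norm_num
  have hf2 : ∀ x : E3, (ENNReal.ofReal (|v x| ^ 3)) ^ (2:ℝ) = (‖v x‖₊ : ℝ≥0∞) ^ (6:ℝ) := by
    intro x
    rw [ENNReal.ofReal_rpow_of_nonneg (by positivity) (by norm_num)]
    rw [show (|v x| ^ 3) ^ (2:ℝ) = |v x| ^ (6:ℕ) by
      rw [show (2:ℝ) = ((2:ℕ):ℝ) by norm_num, Real.rpow_natCast, ← pow_mul]]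
    rw [← Real.norm_eq_abs, ← enorm_eq_nnnorm, ← ofReal_norm]
    rw [ENNReal.ofReal_rpow_of_nonneg (norm_nonneg _) (by norm_num)]
    rw [show ((‖v x‖) ^ (6:ℝ)) = ‖v x‖ ^ (6:ℕ) by
      rw [show (6:ℝ) = ((6:ℕ):ℝ) by norm_num, Real.rpow_natCast]]
  have hg2 : ∀ x : E3, (ENNReal.ofReal ‖fderiv ℝ v x‖) ^ (2:ℝ)
      = (‖fderiv ℝ v x‖₊ : ℝ≥0∞) ^ (2:ℝ) := by
    intro x
    rw [← enorm_eq_nnnorm, ← ofReal_norm]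
  have hUof : U = ∫⁻ x, ENNReal.ofReal (‖fderiv ℝ v x‖ ^ 2) := by
    rw [hU]
    congr 1
    funext x
    rw [← enorm_eq_nnnorm, ← ofReal_norm,
      ENNReal.ofReal_rpow_of_nonneg (norm_nonneg _) (by norm_num)]
    rw [show ((‖fderiv ℝ v x‖) ^ (2:ℝ)) = ‖fderiv ℝ v x‖ ^ (2:ℕ) by
      rw [show (2:ℝ) = ((2:ℕ):ℝ) by norm_num, Real.rpow_natCast]]
  -- Hölder
  have hholder : ∫⁻ x, (ENNReal.ofReal (|v x| ^ 3)) * (ENNReal.ofReal ‖fderiv ℝ v x‖)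
      ≤ T ^ ((1:ℝ)/2) * U ^ ((1:ℝ)/2) := by
    have h := ENNReal.lintegral_mul_le_Lp_mul_Lq (volume : Measure E3)
      Real.HolderConjugate.two_two
      hvmeas.aemeasurable hgmeas.aemeasurable
    simp only [Pi.mul_apply] at h
    refine le_trans h ?_
    apply le_of_eq
    congr 1
    · congr 1
      rw [hT]
      congr 1
      funext x
      rw [hf2 x]
    · congr 1
      rw [hU]
      congr 1
      funext x
      rw [hg2 x]
  -- Sobolev
  have hsob : eLpNorm v ((6:ℝ≥0) : ℝ≥0∞) volume
      ≤ (SNormLESNormFDerivOfEqConst ℝ (volume : Measure E3) ((2:ℝ≥0):ℝ) : ℝ≥0∞)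
        * eLpNorm (fderiv ℝ v) ((2:ℝ≥0) : ℝ≥0∞) volume := by
    apply eLpNorm_le_eLpNorm_fderiv_of_eq (volume : Measure E3) (hv.of_le (by simp)) hsupp
    · norm_num
    · rw [finrank_euclideanSpace_fin]; norm_num
    · rw [finrank_euclideanSpace_fin]; norm_num
  have hS6 : eLpNorm v ((6:ℝ≥0) : ℝ≥0∞) volume = T ^ ((1:ℝ)/6) := by
    rw [eLpNorm_eq_lintegral_rpow_enorm_toReal (by norm_num) (by norm_num), hT]
    norm_num
    simp only [enorm_eq_nnnorm]
  have hN2 : eLpNorm (fderiv ℝ v) ((2:ℝ≥0) : ℝ≥0∞) volume = U ^ ((1:ℝ)/2) := by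
    rw [eLpNorm_eq_lintegral_rpow_enorm_toReal (by norm_num) (by norm_num), hU]
    norm_num
    simp only [enorm_eq_nnnorm]
  rw [hS6, hN2] at hsob
  have hT12 : T ^ ((1:ℝ)/2)
      ≤ ((SNormLESNormFDerivOfEqConst ℝ (volume : Measure E3) ((2:ℝ≥0):ℝ) : ℝ≥0) : ℝ≥0∞) ^ (3:ℝ)
        * U ^ ((3:ℝ)/2) := by
    have h1 : T ^ ((1:ℝ)/2) = (T ^ ((1:ℝ)/6)) ^ (3:ℝ) := by
      rw [← ENNReal.rpow_mul]
      norm_num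
    rw [h1]
    calc (T ^ ((1:ℝ)/6)) ^ (3:ℝ)
        ≤ (((SNormLESNormFDerivOfEqConst ℝ (volume : Measure E3) ((2:ℝ≥0):ℝ) : ℝ≥0) : ℝ≥0∞)
            * U ^ ((1:ℝ)/2)) ^ (3:ℝ) := ENNReal.rpow_le_rpow hsob (by norm_num)
    _ = ((SNormLESNormFDerivOfEqConst ℝ (volume : Measure E3) ((2:ℝ≥0):ℝ) : ℝ≥0) : ℝ≥0∞) ^ (3:ℝ)
          * (U ^ ((1:ℝ)/2)) ^ (3:ℝ) := ENNReal.mul_rpow_of_nonneg _ _ (by norm_num)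
    _ = ((SNormLESNormFDerivOfEqConst ℝ (volume : Measure E3) ((2:ℝ≥0):ℝ) : ℝ≥0) : ℝ≥0∞) ^ (3:ℝ)
          * U ^ ((3:ℝ)/2) := by
          rw [← ENNReal.rpow_mul]
          norm_num
  calc ∫⁻ x, Hfun v x
      = 4 * ∫⁻ x, (ENNReal.ofReal (|v x| ^ 3)) * (ENNReal.ofReal ‖fderiv ℝ v x‖) := by
        simp_rw [hsplit]
        rw [lintegral_const_mul (f := fun x => ENNReal.ofReal (|v x| ^ 3) * ENNReal.ofReal ‖fderiv ℝ v x‖) _ (hvmeas.mul hgmeas)]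
  _ ≤ 4 * (T ^ ((1:ℝ)/2) * U ^ ((1:ℝ)/2)) := mul_le_mul_right hholder _
  _ ≤ 4 * ((((SNormLESNormFDerivOfEqConst ℝ (volume : Measure E3) ((2:ℝ≥0):ℝ) : ℝ≥0) : ℝ≥0∞) ^ (3:ℝ)
        * U ^ ((3:ℝ)/2)) * U ^ ((1:ℝ)/2)) := by
        exact mul_le_mul_right (mul_le_mul_left hT12 _) _
  _ = Csob * (U ^ ((3:ℝ)/2) * U ^ ((1:ℝ)/2)) := by
        rw [Csob]; ring
  _ = Csob * U ^ (2:ℕ) := by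
        congr 1
        rw [← ENNReal.rpow_add_of_nonneg _ _ (by norm_num) (by norm_num)]
        rw [show (3:ℝ)/2 + 1/2 = ((2:ℕ):ℝ) by norm_num, ENNReal.rpow_natCast]
  _ = Csob * (∫⁻ x, ENNReal.ofReal (‖fderiv ℝ v x‖ ^ 2)) ^ (2:ℕ) := by rw [← hUof]

end TraceAux

open Filter in
/-- Trace-type inequality: r^{1/2}‖v(r·)‖_{L⁴(S²)} ≤ C‖∇v‖_{L²(ℝ³)}. -/
theorem trace_type_inequality :
    ∃ C > 0, ∀ v : E3 → ℝ, ContDiff ℝ (⊤ : ℕ∞) v → HasCompactSupport v →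
      ∀ r : ℝ, 0 < r →
        r ^ ((1 : ℝ) / 2) *
            (∫ ω in Metric.sphere (0 : E3) 1, |v (r • ω)| ^ (4 : ℕ) ∂(μH[2])) ^ ((1 : ℝ) / 4)
          ≤ C * (∫ x : E3, ‖fderiv ℝ v x‖ ^ 2) ^ ((1 : ℝ) / 2) := by
  classical
  set K : ℝ≥0∞ := 1350 * TraceAux.Csob with hK
  have hKtop : K ≠ ⊤ := ENNReal.mul_ne_top (by norm_num) TraceAux.Csob_ne_top
  refine ⟨K.toReal ^ ((1:ℝ)/4) + 1, by positivity, ?_⟩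
  intro v hv hsupp r hr
  set Jr : ℝ := ∫ x : E3, ‖fderiv ℝ v x‖ ^ 2 with hJr
  have hJrnn : 0 ≤ Jr := integral_nonneg fun x => by positivity
  have hgradcont : Continuous fun x : E3 => ‖fderiv ℝ v x‖ ^ 2 :=
    ((hv.continuous_fderiv (by simp)).norm.pow 2)
  have hgradsupp : HasCompactSupport fun x : E3 => ‖fderiv ℝ v x‖ ^ 2 :=
    HasCompactSupport.comp_left (g := fun L : E3 →L[ℝ] ℝ => ‖L‖ ^ 2)
      (HasCompactSupport.fderiv ℝ hsupp) (by simp)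
  have hgradint : Integrable (fun x : E3 => ‖fderiv ℝ v x‖ ^ 2) :=
    hgradcont.integrable_of_hasCompactSupport hgradsupp
  set J : ℝ≥0∞ := ∫⁻ x : E3, ENNReal.ofReal (‖fderiv ℝ v x‖ ^ 2) with hJ
  have hJeq : J = ENNReal.ofReal Jr := by
    rw [hJ, hJr, ofReal_integral_eq_lintegral_ofReal hgradint
      (Eventually.of_forall fun x => by positivity)]
  have hJtop : J ≠ ⊤ := by rw [hJeq]; exact ENNReal.ofReal_ne_top
  set I : ℝ≥0∞ := ∫⁻ ω in Metric.sphere (0:E3) 1,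
      ENNReal.ofReal (|v (r • ω)| ^ 4) ∂μH[2] with hI
  have hIcaps : I ≤ ENNReal.ofReal ((r^2)⁻¹) * (K * J^(2:ℕ)) := by
    have hmono : I ≤ ∫⁻ ω in ⋃ c : Fin 3 × Bool, TraceAux.cap c.1 (if c.2 then 1 else -1),
        ENNReal.ofReal (|v (r • ω)| ^ 4) ∂μH[2] :=
      lintegral_mono_set TraceAux.sphere_subset_caps
    have hunion := lintegral_iUnion_le (μ := (μH[2] : Measure E3))
      (fun c : Fin 3 × Bool => TraceAux.cap c.1 (if c.2 then 1 else -1))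
      (fun ω => ENNReal.ofReal (|v (r • ω)| ^ 4))
    have hcap : ∀ c : Fin 3 × Bool,
        ∫⁻ ω in TraceAux.cap c.1 (if c.2 then 1 else -1),
            ENNReal.ofReal (|v (r • ω)| ^ 4) ∂μH[2]
          ≤ ENNReal.ofReal ((r^2)⁻¹) * (225 * ∫⁻ x, TraceAux.Hfun v x) := by
      intro c
      apply TraceAux.capMain hv hsupp c.1 _ _ hr
      cases c.2 <;> simp
    have hG := TraceAux.globalBound hv hsupp
    calc I ≤ ∑' c : Fin 3 × Bool, ∫⁻ ω in TraceAux.cap c.1 (if c.2 then 1 else -1),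
          ENNReal.ofReal (|v (r • ω)| ^ 4) ∂μH[2] := le_trans hmono hunion
    _ ≤ ∑' _c : Fin 3 × Bool, ENNReal.ofReal ((r^2)⁻¹) * (225 * ∫⁻ x, TraceAux.Hfun v x) :=
        ENNReal.tsum_le_tsum hcap
    _ = 6 * (ENNReal.ofReal ((r^2)⁻¹) * (225 * ∫⁻ x, TraceAux.Hfun v x)) := by
        rw [tsum_fintype, Finset.sum_const, Finset.card_univ, nsmul_eq_mul]
        norm_num
    _ = ENNReal.ofReal ((r^2)⁻¹) * (1350 * ∫⁻ x, TraceAux.Hfun v x) := by ring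
    _ ≤ ENNReal.ofReal ((r^2)⁻¹) * (1350 * (TraceAux.Csob
          * (∫⁻ x : E3, ENNReal.ofReal (‖fderiv ℝ v x‖ ^ 2))^(2:ℕ))) :=
        mul_le_mul_right (mul_le_mul_right hG _) _
    _ = ENNReal.ofReal ((r^2)⁻¹) * (K * J^(2:ℕ)) := by rw [hK, hJ]; ring
  have hRHStop : ENNReal.ofReal ((r^2)⁻¹) * (K * J^(2:ℕ)) ≠ ⊤ :=
    ENNReal.mul_ne_top ENNReal.ofReal_ne_top
      (ENNReal.mul_ne_top hKtop (ENNReal.pow_ne_top hJtop))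
  have hA : (∫ ω in Metric.sphere (0:E3) 1, |v (r • ω)| ^ (4:ℕ) ∂μH[2]) = I.toReal := by
    have hc : Continuous fun ω : E3 => |v (r • ω)| ^ (4:ℕ) := by
      have h := ((hv.continuous.comp (continuous_const_smul r)).abs.pow 4)
      exact h
    rw [hI]
    exact integral_eq_lintegral_of_nonneg_ae
      (Eventually.of_forall fun ω => by positivity) hc.aestronglyMeasurable
  have hreal : I.toReal ≤ (r^2)⁻¹ * (K.toReal * Jr^2) := by
    have h := ENNReal.toReal_mono hRHStop hIcaps
    rwa [ENNReal.toReal_mul, ENNReal.toReal_mul, ENNReal.toReal_pow,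
      ENNReal.toReal_ofReal (by positivity), hJeq, ENNReal.toReal_ofReal hJrnn] at h
  rw [hA]
  have hInn : (0:ℝ) ≤ I.toReal := ENNReal.toReal_nonneg
  have h4 : I.toReal ^ ((1:ℝ)/4) ≤ ((r^2)⁻¹ * (K.toReal * Jr^2)) ^ ((1:ℝ)/4) :=
    Real.rpow_le_rpow hInn hreal (by norm_num)
  have hKnn : (0:ℝ) ≤ K.toReal := ENNReal.toReal_nonneg
  have hsplit : ((r^2)⁻¹ * (K.toReal * Jr^2)) ^ ((1:ℝ)/4)
      = ((r^2)⁻¹) ^ ((1:ℝ)/4) * (K.toReal ^ ((1:ℝ)/4) * (Jr^2) ^ ((1:ℝ)/4)) := by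
    rw [Real.mul_rpow (by positivity) (by positivity),
      Real.mul_rpow hKnn (by positivity)]
  have hJr14 : (Jr^2) ^ ((1:ℝ)/4) = Jr ^ ((1:ℝ)/2) := by
    rw [← Real.rpow_natCast Jr 2, ← Real.rpow_mul hJrnn]
    norm_num
  have hr14 : ((r^2)⁻¹) ^ ((1:ℝ)/4) = r ^ (-(1:ℝ)/2) := by
    rw [← Real.rpow_natCast r 2, ← Real.rpow_neg hr.le, ← Real.rpow_mul hr.le]
    norm_num
  have hid : r ^ ((1:ℝ)/2) * r ^ (-(1:ℝ)/2) = 1 := by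
    rw [← Real.rpow_add hr]
    norm_num
  calc r ^ ((1:ℝ)/2) * I.toReal ^ ((1:ℝ)/4)
      ≤ r ^ ((1:ℝ)/2) * ((r^2)⁻¹ * (K.toReal * Jr^2)) ^ ((1:ℝ)/4) := by
        apply mul_le_mul_of_nonneg_left h4 (Real.rpow_nonneg hr.le _)
  _ = (r ^ ((1:ℝ)/2) * r ^ (-(1:ℝ)/2)) * (K.toReal ^ ((1:ℝ)/4) * Jr ^ ((1:ℝ)/2)) := by
        rw [hsplit, hJr14, hr14]; ring
  _ = K.toReal ^ ((1:ℝ)/4) * Jr ^ ((1:ℝ)/2) := by rw [hid, one_mul]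
  _ ≤ (K.toReal ^ ((1:ℝ)/4) + 1) * Jr ^ ((1:ℝ)/2) := by
        apply mul_le_mul_of_nonneg_right (by linarith) (Real.rpow_nonneg hJrnn _)
end
end
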